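/- Let H : ℤ₂ → F₂[[q]] be any bijection satisfying H ∘ T = T_{1,1+q²} ∘ H. Then for every positive integer n (regarded as an element of ℤ₂), the T-orbit of n contains 1 (i.e., there exists k with T^k(n) = 1) if and only if H(n) is a polynomial. -/

import Mathlib

open PowerSeries
open scoped Classical

/-- Shift map on `F₂[[q]]`: equals `x / q` whenever `q ∣ x`. -/
noncomputable def divq (x : PowerSeries (ZMod 2)) : PowerSeries (ZMod 2) :=
  PowerSeries.mk fun n => PowerSeries.coeff (n + 1) x

/-- `T_{A,B}(x) = x/q` if `q ∣ x`, and `(A*x + B)/q` otherwise.  (When `A`, `B`, `x` are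
all odd, `A*x + B` is divisible by `q`, so `divq` computes the true quotient there.) -/
noncomputable def Tab (A B x : PowerSeries (ZMod 2)) : PowerSeries (ZMod 2) :=
  if X ∣ x then divq x else divq (A * x + B)
/-- `half x` is the unique `y` with `x = 2 * y`, when `2 ∣ x` (and `0` otherwise). -/
noncomputable def half (x : ℤ_[2]) : ℤ_[2] :=
  if h : (2 : ℤ_[2]) ∣ x then h.choose else 0

/-- The `3x+1` map `T : ℤ₂ → ℤ₂`: `x/2` if `x` is even, `(3x+1)/2` if `x` is odd. -/
noncomputable def T3x1 (x : ℤ_[2]) : ℤ_[2] :=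
  if (2 : ℤ_[2]) ∣ x then half x else half (3 * x + 1)

/-- An element of `F₂[[q]]` is a polynomial if it has only finitely many nonzero
coefficients. -/
def IsPolynomial (x : PowerSeries (ZMod 2)) : Prop :=
  {n : ℕ | PowerSeries.coeff n x ≠ 0}.Finite

/-!
`T_{1,1+q²}` lowers the degree of every polynomial of degree `≥ 2` and neither creates nor
destroys polynomiality, so a series is a polynomial iff its orbit reaches the series of degree
`≤ 1`; these are exactly the points of period dividing 2, since `T_{1,1+q²}` swaps the two
coefficients of `a + b q`. The only positive integers of period dividing 2 under `T` are `1`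
and `2`, and the injective conjugacy `H` carries period-2 points of `T` to period-2 points of
`T_{1,1+q²}` and back.
-/

open Function

instance : CharP (ZMod 2)⟦X⟧ 2 := charP_of_injective_ringHom C_injective 2

theorem Function.Semiconj.isPeriodicPt_of_injective {α β : Type*} {fa : α → α} {fb : β → β}
    {g : α → β} (h : Semiconj g fa fb) (hg : Injective g) {n : ℕ} {x : α}
    (hx : IsPeriodicPt fb n (g x)) : IsPeriodicPt fa n x :=
  hg ((h.iterate_right n x).trans hx)

section DegreeLT

variable {R : Type*} [Semiring R]

def DegreeLT (d : ℕ) (x : R⟦X⟧) : Prop :=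
  ∀ m, d ≤ m → coeff m x = 0

theorem DegreeLT.mono {d e : ℕ} {x : R⟦X⟧} (hde : d ≤ e) (hx : DegreeLT d x) : DegreeLT e x :=
  fun m hm => hx m (hde.trans hm)

theorem degreeLT_two_iff {x : R⟦X⟧} : DegreeLT 2 x ↔ ∃ a b, x = C a + C b * X := by
  constructor
  · intro hx
    refine ⟨coeff 0 x, coeff 1 x, ?_⟩
    ext n
    match n with
    | 0 | 1 => simp
    | m + 2 => simp [hx (m + 2) (by omega)]
  · rintro ⟨a, b, rfl⟩ m hm
    simp [coeff_C, coeff_C_mul, coeff_X, show m ≠ 0 by omega, show m ≠ 1 by omega]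

end DegreeLT

theorem isPolynomial_iff_exists_degreeLT {x : (ZMod 2)⟦X⟧} :
    IsPolynomial x ↔ ∃ d, DegreeLT d x := by
  constructor
  · intro hx
    obtain ⟨N, hN⟩ := hx.bddAbove
    exact ⟨N + 1, fun m hm => by_contra fun hne => by have := hN hne; omega⟩
  · rintro ⟨d, hd⟩
    refine (Set.finite_lt_nat d).subset fun m hm => ?_
    by_contra! hdm
    exact hm (hd m (not_lt.1 hdm))

theorem coeff_divq (x : (ZMod 2)⟦X⟧) (n : ℕ) : coeff n (divq x) = coeff (n + 1) x :=
  coeff_mk _ _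

theorem X_mul_divq {x : (ZMod 2)⟦X⟧} (hx : constantCoeff x = 0) : X * divq x = x := by
  have h := eq_X_mul_shift_add_const x
  rw [hx, map_zero, add_zero] at h
  exact h.symm

theorem Tab_one_eq (B x : (ZMod 2)⟦X⟧) : Tab 1 B x = divq (x + C (constantCoeff x) * B) := by
  by_cases hx : X ∣ x
  · rw [Tab, if_pos hx, X_dvd_iff.1 hx, map_zero, zero_mul, add_zero]
  · have hx1 : constantCoeff x = 1 := by
      have h := X_dvd_iff.not.1 hx
      generalize constantCoeff x = a at h
      revert a
      decide
    rw [Tab, if_neg hx, hx1, map_one, one_mul, one_mul]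

theorem coeff_Tab_one (B x : (ZMod 2)⟦X⟧) (n : ℕ) :
    coeff n (Tab 1 B x) = coeff (n + 1) x + constantCoeff x * coeff (n + 1) B := by
  rw [Tab_one_eq, coeff_divq, map_add, coeff_C_mul]

theorem X_mul_Tab_one {B : (ZMod 2)⟦X⟧} (hB : constantCoeff B = 1) (x : (ZMod 2)⟦X⟧) :
    X * Tab 1 B x = x + C (constantCoeff x) * B := by
  rw [Tab_one_eq, X_mul_divq]
  simp [hB, CharTwo.add_self_eq_zero]

theorem degreeLT_Tab_one_iff {B x : (ZMod 2)⟦X⟧} {d : ℕ} (hB : DegreeLT (d + 1) B) :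
    DegreeLT d (Tab 1 B x) ↔ DegreeLT (d + 1) x := by
  have hcoeff : ∀ m, d ≤ m → coeff m (Tab 1 B x) = coeff (m + 1) x := fun m hm => by
    rw [coeff_Tab_one, hB (m + 1) (by omega), mul_zero, add_zero]
  constructor
  · intro h m hm
    obtain ⟨m, rfl⟩ : ∃ k, m = k + 1 := ⟨m - 1, by omega⟩
    rw [← hcoeff m (by omega)]
    exact h m (by omega)
  · intro h m hm
    rw [hcoeff m hm]
    exact h (m + 1) (by omega)

theorem isPolynomial_Tab_one_iff {B : (ZMod 2)⟦X⟧} (hB : IsPolynomial B) (x : (ZMod 2)⟦X⟧) :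
    IsPolynomial (Tab 1 B x) ↔ IsPolynomial x := by
  obtain ⟨e, he⟩ := isPolynomial_iff_exists_degreeLT.1 hB
  simp only [isPolynomial_iff_exists_degreeLT]
  constructor
  · rintro ⟨d, hd⟩
    exact ⟨max d e + 1, (degreeLT_Tab_one_iff (he.mono (by omega))).1 (hd.mono (by omega))⟩
  · rintro ⟨d, hd⟩
    exact ⟨max d e, (degreeLT_Tab_one_iff (he.mono (by omega))).2 (hd.mono (by omega))⟩

theorem degreeLT_one_add_X_sq : DegreeLT 3 (1 + X ^ 2 : (ZMod 2)⟦X⟧) := fun m hm => by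
  simp [coeff_one, coeff_X_pow, show m ≠ 0 by omega, show m ≠ 2 by omega]

theorem isPolynomial_iterate_Tab_iff (k : ℕ) (x : (ZMod 2)⟦X⟧) :
    IsPolynomial ((Tab 1 (1 + X ^ 2))^[k] x) ↔ IsPolynomial x := by
  induction k with
  | zero => rfl
  | succ k ih =>
    rw [iterate_succ_apply', isPolynomial_Tab_one_iff
      (isPolynomial_iff_exists_degreeLT.2 ⟨3, degreeLT_one_add_X_sq⟩), ih]

theorem exists_degreeLT_two_iterate_Tab {x : (ZMod 2)⟦X⟧} (hx : IsPolynomial x) :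
    ∃ k, DegreeLT 2 ((Tab 1 (1 + X ^ 2))^[k] x) := by
  obtain ⟨d, hd⟩ := isPolynomial_iff_exists_degreeLT.1 hx
  suffices ∀ d x, DegreeLT (d + 2) x → ∃ k, DegreeLT 2 ((Tab 1 (1 + X ^ 2))^[k] x) from
    this d x (hd.mono (by omega))
  intro d
  induction d with
  | zero => exact fun x hx => ⟨0, hx⟩
  | succ d ih =>
    intro x hx
    obtain ⟨k, hk⟩ := ih _ ((degreeLT_Tab_one_iff (degreeLT_one_add_X_sq.mono (by omega))).2 hx)
    exact ⟨k + 1, by rwa [iterate_succ_apply]⟩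

theorem Tab_C_add_C_mul_X (a b : ZMod 2) :
    Tab 1 (1 + X ^ 2) (C a + C b * X) = C b + C a * X := by
  apply X_mul_cancel
  rw [X_mul_Tab_one (by simp), show constantCoeff (C a + C b * X) = a by simp]
  linear_combination (C a : (ZMod 2)⟦X⟧) * CharTwo.two_eq_zero (R := (ZMod 2)⟦X⟧)

theorem isPeriodicPt_two_Tab_iff {x : (ZMod 2)⟦X⟧} :
    IsPeriodicPt (Tab 1 (1 + X ^ 2)) 2 x ↔ DegreeLT 2 x := by
  rw [degreeLT_two_iff]
  constructor
  · intro hx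
    set y := Tab 1 (1 + X ^ 2) x
    have hxy : X * y = x + C (constantCoeff x) * (1 + X ^ 2) := X_mul_Tab_one (by simp) x
    have hyx : X * x = y + C (constantCoeff y) * (1 + X ^ 2) := by
      rw [← X_mul_Tab_one (by simp) y]
      exact congrArg (X * ·) hx.symm
    refine ⟨constantCoeff x, constantCoeff y, ?_⟩
    -- Applying `X * ·` twice gives `(X² - 1) x = (x₀ + y₀ X)(1 + X²)`, and `X² - 1 = 1 + X²`.
    have h : (1 + X ^ 2) * (x - (C (constantCoeff x) + C (constantCoeff y) * X)) = 0 := by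
      linear_combination X * hyx + hxy + x * CharTwo.two_eq_zero (R := (ZMod 2)⟦X⟧)
    refine sub_eq_zero.1 ((mul_eq_zero.1 h).resolve_left fun h0 => ?_)
    simpa using congrArg constantCoeff h0
  · rintro ⟨a, b, rfl⟩
    show Tab 1 (1 + X ^ 2) (Tab 1 (1 + X ^ 2) _) = _
    rw [Tab_C_add_C_mul_X, Tab_C_add_C_mul_X]

def collatzStep (n : ℕ) : ℕ :=
  if n % 2 = 0 then n / 2 else (3 * n + 1) / 2

theorem collatzStep_pos {n : ℕ} (hn : 0 < n) : 0 < collatzStep n := by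
  unfold collatzStep
  split <;> omega

theorem isPeriodicPt_collatzStep_one : IsPeriodicPt collatzStep 2 1 := rfl

theorem exists_iterate_collatzStep_eq_one {m : ℕ} (hm : 0 < m)
    (h : IsPeriodicPt collatzStep 2 m) : ∃ j, collatzStep^[j] m = 1 := by
  have : m = 1 ∨ m = 2 := by
    simp only [IsPeriodicPt, IsFixedPt, iterate_succ_apply, iterate_zero_apply, collatzStep] at h
    split_ifs at h <;> omega
  rcases this with rfl | rfl
  exacts [⟨0, rfl⟩, ⟨1, rfl⟩]

theorem half_two_mul (y : ℤ_[2]) : half (2 * y) = y := by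
  have h : (2 : ℤ_[2]) ∣ 2 * y := dvd_mul_right 2 y
  rw [half, dif_pos h]
  exact mul_left_cancel₀ two_ne_zero h.choose_spec.symm

theorem two_dvd_natCast_iff (n : ℕ) : (2 : ℤ_[2]) ∣ n ↔ 2 ∣ n := by
  have h := PadicInt.pow_p_dvd_int_iff (p := 2) 1 n
  simp only [pow_one, Nat.cast_ofNat, Int.cast_natCast] at h
  exact_mod_cast h

theorem semiconj_natCast_collatzStep : Semiconj ((↑) : ℕ → ℤ_[2]) collatzStep T3x1 := by
  intro n
  rcases Nat.even_or_odd' n with ⟨m, rfl | rfl⟩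
  · rw [T3x1, if_pos ((two_dvd_natCast_iff _).2 (dvd_mul_right 2 m)), Nat.cast_mul,
      Nat.cast_ofNat, half_two_mul, collatzStep, if_pos (by omega),
      Nat.mul_div_cancel_left m two_pos]
  · have h : 3 * ((2 * m + 1 : ℕ) : ℤ_[2]) + 1 = 2 * ((3 * m + 2 : ℕ) : ℤ_[2]) := by
      push_cast
      ring
    rw [T3x1, if_neg (by rw [two_dvd_natCast_iff]; omega), h, half_two_mul, collatzStep,
      if_neg (by omega)]
    congr 1
    omega

/-- If `H : ℤ₂ → F₂[[q]]` is any conjugacy from `T` to `T_{1,1+q²}`, then for every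
positive integer `n`, the `T`-orbit of `n` contains `1` iff `H(n)` is a polynomial. -/
theorem orbit_one_iff_isPolynomial (H : ℤ_[2] → PowerSeries (ZMod 2))
    (hbij : Function.Bijective H)
    (hconj : H ∘ T3x1 = Tab 1 (1 + X ^ 2) ∘ H)
    (n : ℕ) (hn : 0 < n) :
    (∃ k : ℕ, T3x1^[k] (n : ℤ_[2]) = 1) ↔ IsPolynomial (H (n : ℤ_[2])) := by
  have hH : Semiconj H T3x1 (Tab 1 (1 + X ^ 2)) := congrFun hconj
  have hHn : Semiconj (H ∘ (↑)) collatzStep (Tab 1 (1 + X ^ 2)) :=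
    hH.comp_left semiconj_natCast_collatzStep
  constructor
  · rintro ⟨k, hk⟩
    have h1 : IsPeriodicPt (Tab 1 (1 + X ^ 2)) 2 (H 1) := by
      simpa using isPeriodicPt_collatzStep_one.map hHn
    rw [← isPolynomial_iterate_Tab_iff k, ← hH.iterate_right, hk]
    exact isPolynomial_iff_exists_degreeLT.2 ⟨2, isPeriodicPt_two_Tab_iff.1 h1⟩
  · intro hpoly
    obtain ⟨k, hk⟩ := exists_degreeLT_two_iterate_Tab hpoly
    have hper : IsPeriodicPt collatzStep 2 (collatzStep^[k] n) := by
      refine hHn.isPeriodicPt_of_injective (hbij.injective.comp Nat.cast_injective) ?_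
      rw [hHn.iterate_right]
      exact isPeriodicPt_two_Tab_iff.2 hk
    obtain ⟨j, hj⟩ := exists_iterate_collatzStep_eq_one
      (Iterate.rec (0 < ·) hn (fun _ => collatzStep_pos) k) hper
    refine ⟨j + k, ?_⟩
    rw [← semiconj_natCast_collatzStep.iterate_right, iterate_add_apply, hj, Nat.cast_one]
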